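/- Let G = (V, E) be a multihypergraph with a finite-dimensional Hilbert space H_v = ℂ^{d_v} at each vertex and a self-adjoint interaction Φ(ε) on H_ε = ⨂_{v∈ε} H_v assigned to each edge ε, regarded as acting on H_G = ⨂_{v∈V} H_v by tensoring with the identity. Let H_G = Σ_{ε∈E} Φ(ε), let tr be the trace normalized so that tr(I) = 1, and let β ∈ ℂ. Then Z_G(β) = tr[e^{−β H_G}] = Σ_{S ⊆ E} Π_{γ ∈ comp(S)} w_γ, where comp(S) is the set of maximal connected components of the subgraph with edge set S, and for a connected subgraph γ, w_γ = (−1)^{‖γ‖} Σ_{T ⊆ E(γ)} (−1)^{|T|} tr[ e^{−β Σ_{ε∈T} Φ(ε)} ] (the normalized trace taken over ⨂_{v∈V(γ)} H_v, with ‖γ‖ the number of edges of γ). The empty set S = ∅ contributes 1. -/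

import Mathlib

/-!
Write `Z(T) = tr e^{-β Σ_{ε∈T} Φ(ε)}` for a set `T` of edges, so that the left-hand side is
`Z(E)`. If the vertex sets of `T₁` and `T₂` are disjoint, the two Hamiltonians are lifts of
operators on disjoint tensor factors: they commute and the normalized trace of the product of
their exponentials factorizes, so `Z(T₁ ∪ T₂) = Z(T₁) Z(T₂)`. The Möbius transform
`w(S) = Σ_{T ⊆ S} (-1)^{|S \ T|} Z(T)` inherits this multiplicativity, hence `w(S)` is the
product of `w` over the connected components of `S`, while Möbius inversion gives
`Σ_S w(S) = Z(E)`. Finally `w_γ` computed on `⨂_{v∈V(γ)} H_v` equals `w(γ)` because the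
normalized trace is unchanged by tensoring with the identity.
-/

open scoped Classical Matrix

namespace Stmt14

variable {V Eg : Type*}

/-- Configurations of the qudits in a subset `T` of the vertices: the index set of a
basis of `⨂_{v∈T} ℂ^{d_v}`. -/
abbrev Loc {V : Type*} (dim : V → ℕ) (T : Finset V) : Type _ := ∀ v : T, Fin (dim v)

/-- Configurations of all qudits: the index set of a basis of `H_G = ⨂_{v∈V} ℂ^{d_v}`. -/
abbrev Glob (dim : V → ℕ) : Type _ := ∀ v : V, Fin (dim v)

/-- The lift of an operator on `⨂_{v∈S} ℂ^{d_v}` to an operator on `⨂_{v∈T} ℂ^{d_v}`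
(for `S ⊆ T`), tensoring with the identity elsewhere. -/
noncomputable def liftMat {dim : V → ℕ} {S T : Finset V} (h : S ⊆ T)
    (A : Matrix (Loc dim S) (Loc dim S) ℂ) : Matrix (Loc dim T) (Loc dim T) ℂ :=
  fun x y => (if ∀ v : T, ↑v ∉ S → x v = y v then 1 else 0) *
    A (fun v => x ⟨v.1, h v.2⟩) (fun v => y ⟨v.1, h v.2⟩)

/-- The lift of an operator on `⨂_{v∈S} ℂ^{d_v}` to an operator on the full space,
tensoring with the identity elsewhere. -/
noncomputable def liftGlobal (dim : V → ℕ) (S : Finset V)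
    (A : Matrix (Loc dim S) (Loc dim S) ℂ) : Matrix (Glob dim) (Glob dim) ℂ :=
  fun x y => (if ∀ v : V, v ∉ S → x v = y v then 1 else 0) *
    A (fun v => x v) (fun v => y v)

/-- The trace normalized so that the trace of the identity is `1`. -/
noncomputable def ntraceM {n : Type*} [Fintype n] (M : Matrix n n ℂ) : ℂ :=
  Matrix.trace M / (Fintype.card n : ℂ)

/-- The vertex set `V(S) = ⋃_{ε∈S} ε` of the subgraph determined by a set `S` of edges. -/
abbrev vertexSet [DecidableEq V] (edge : Eg → Finset V) (S : Finset Eg) : Finset V :=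
  S.biUnion edge

/-- A subgraph determined by a set `S` of edges is connected. -/
def ConnectedSub [DecidableEq V] (edge : Eg → Finset V) (S : Finset Eg) : Prop :=
  S.Nonempty ∧ ∀ a ∈ S, ∀ b ∈ S,
    Relation.ReflTransGen (fun x y => x ∈ S ∧ y ∈ S ∧ (edge x ∩ edge y).Nonempty) a b

/-- `T` is a maximal connected component of the subgraph determined by `S`. -/
def IsComponent [DecidableEq V] (edge : Eg → Finset V) (S T : Finset Eg) : Prop :=
  T ⊆ S ∧ ConnectedSub edge T ∧
    ∀ T' : Finset Eg, T ⊆ T' → T' ⊆ S → ConnectedSub edge T' → T' = T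

/-- The set `comp(S)` of maximal connected components of the subgraph determined by `S`. -/
noncomputable def comp [DecidableEq V] [Fintype Eg] (edge : Eg → Finset V) (S : Finset Eg) :
    Finset (Finset Eg) :=
  Finset.univ.filter (fun T => IsComponent edge S T)

/-- The polymer weight
`w_γ = (−1)^{‖γ‖} Σ_{T ⊆ E(γ)} (−1)^{|T|} tr[e^{−β Σ_{ε∈T} Φ(ε)}]`, the normalized
trace taken over `⨂_{v∈V(γ)} ℂ^{d_v}`. -/
noncomputable def weight [DecidableEq V] (edge : Eg → Finset V) (dim : V → ℕ)
    (Φ : ∀ e : Eg, Matrix (Loc dim (edge e)) (Loc dim (edge e)) ℂ)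
    (β : ℂ) (γ : Finset Eg) : ℂ :=
  (-1 : ℂ) ^ γ.card *
    ∑ T ∈ γ.powerset, (-1 : ℂ) ^ T.card *
      ntraceM (NormedSpace.exp
        ((-β) • ∑ e ∈ T,
          (if he : e ∈ γ then
            liftMat (Finset.subset_biUnion_of_mem edge he) (Φ e)
          else 0 :
            Matrix (Loc dim (vertexSet edge γ)) (Loc dim (vertexSet edge γ)) ℂ)))

section Mobius

variable {α R : Type*} [CommRing R]

theorem sum_powerset_union_of_disjoint [DecidableEq α] {M : Type*} [AddCommMonoid M]
    {s t : Finset α} (h : Disjoint s t) (f : Finset α → M) :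
    ∑ u ∈ (s ∪ t).powerset, f u =
      ∑ a ∈ s.powerset, ∑ b ∈ t.powerset, f (a ∪ b) := by
  have hinj : Set.InjOn (Function.uncurry (· ⊔ ·))
      (↑(s.powerset ×ˢ t.powerset) : Set (Finset α × Finset α)) := by
    rintro ⟨a, b⟩ hab ⟨a', b'⟩ hab' heq
    simp only [Finset.coe_product, Set.mem_prod, Finset.mem_coe, Finset.mem_powerset] at hab hab'
    ext x <;> have := Finset.ext_iff.1 heq x <;> grind [Finset.disjoint_left]
  rw [Finset.powerset_union, ← Finset.image_sup_product, Finset.sum_image hinj,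
    Finset.sum_product]
  rfl

def mobiusPowerset (f : Finset α → R) (S : Finset α) : R :=
  (-1) ^ S.card * ∑ T ∈ S.powerset, (-1) ^ T.card * f T

theorem mobiusPowerset_empty (f : Finset α → R) : mobiusPowerset f ∅ = f ∅ := by
  simp [mobiusPowerset]

theorem mobiusPowerset_union [DecidableEq α] {f : Finset α → R} {S T : Finset α}
    (hST : Disjoint S T) (hf : ∀ A ⊆ S, ∀ B ⊆ T, f (A ∪ B) = f A * f B) :
    mobiusPowerset f (S ∪ T) = mobiusPowerset f S * mobiusPowerset f T := by
  rw [mobiusPowerset, mobiusPowerset, mobiusPowerset, Finset.card_union_of_disjoint hST, pow_add,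
    mul_mul_mul_comm, Finset.sum_mul_sum, sum_powerset_union_of_disjoint hST]
  congr 1
  refine Finset.sum_congr rfl fun A hA => Finset.sum_congr rfl fun B hB => ?_
  rw [Finset.mem_powerset] at hA hB
  rw [Finset.card_union_of_disjoint (hST.mono hA hB), pow_add, hf A hA B hB]
  ring

theorem sum_superset_neg_one_pow_card [Fintype α] [DecidableEq α] (T : Finset α) :
    ∑ S ∈ Finset.Icc T Finset.univ, (-1 : R) ^ S.card =
      if T = Finset.univ then (-1) ^ T.card else 0 := by
  have hdisj : ∀ A ∈ (Finset.univ \ T).powerset, Disjoint T A := fun A hA =>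
    (Finset.subset_sdiff.1 (Finset.mem_powerset.1 hA)).2.symm
  have hinj : Set.InjOn (T ∪ ·) ↑(Finset.univ \ T).powerset := fun A hA B hB hAB => by
    rw [← Finset.union_sdiff_cancel_left (hdisj A hA),
      ← Finset.union_sdiff_cancel_left (hdisj B hB)]
    exact congrArg (· \ T) hAB
  have hsum := congrArg (Int.cast : ℤ → R)
    (Finset.sum_powerset_neg_one_pow_card (x := Finset.univ \ T))
  push_cast at hsum
  rw [Finset.Icc_eq_image_powerset (Finset.subset_univ T), Finset.sum_image hinj,
    Finset.sum_congr rfl fun A hA => by rw [Finset.card_union_of_disjoint (hdisj A hA), pow_add],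
    ← Finset.mul_sum, hsum]
  simp [Finset.sdiff_eq_empty_iff_subset, Finset.univ_subset_iff]

theorem sum_mobiusPowerset [Fintype α] [DecidableEq α] (f : Finset α → R) :
    ∑ S, mobiusPowerset f S = f Finset.univ := by
  calc ∑ S, mobiusPowerset f S
      = ∑ S, ∑ T ∈ S.powerset, (-1 : R) ^ S.card * ((-1) ^ T.card * f T) :=
        Finset.sum_congr rfl fun S _ => Finset.mul_sum _ _ _
    _ = ∑ T, ∑ S ∈ Finset.Icc T Finset.univ, (-1 : R) ^ S.card * ((-1) ^ T.card * f T) :=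
        Finset.sum_comm' fun S T => by simp only [Finset.mem_univ, Finset.mem_powerset,
          Finset.mem_Icc, Finset.subset_univ, and_true, true_and]
    _ = ∑ T, if T = Finset.univ then (-1 : R) ^ T.card * ((-1) ^ T.card * f T) else 0 := by
        simp only [← Finset.sum_mul, sum_superset_neg_one_pow_card, ite_mul, zero_mul]
    _ = f Finset.univ := by
        rw [Finset.sum_ite_eq', if_pos (Finset.mem_univ _), ← mul_assoc, ← pow_add,
          Even.neg_one_pow ⟨_, rfl⟩, one_mul]

end Mobius

section Components

variable [DecidableEq V] (edge : Eg → Finset V)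

def EdgeAdj (S : Finset Eg) (a b : Eg) : Prop :=
  a ∈ S ∧ b ∈ S ∧ (edge a ∩ edge b).Nonempty

instance (S : Finset Eg) : Std.Symm (EdgeAdj edge S) :=
  ⟨fun a b h => ⟨h.2.1, h.1, Finset.inter_comm (edge a) (edge b) ▸ h.2.2⟩⟩

noncomputable def componentOf (S : Finset Eg) (e : Eg) : Finset Eg :=
  S.filter (Relation.ReflTransGen (EdgeAdj edge S) e)

variable {edge}

theorem mem_componentOf {S : Finset Eg} {e b : Eg} :
    b ∈ componentOf edge S e ↔ b ∈ S ∧ Relation.ReflTransGen (EdgeAdj edge S) e b :=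
  Finset.mem_filter

theorem self_mem_componentOf {S : Finset Eg} {e : Eg} (he : e ∈ S) : e ∈ componentOf edge S e :=
  mem_componentOf.2 ⟨he, .refl⟩

theorem componentOf_eq_of_reflTransGen {S : Finset Eg} {a b : Eg}
    (hab : Relation.ReflTransGen (EdgeAdj edge S) a b) :
    componentOf edge S a = componentOf edge S b := by
  ext c
  simp only [mem_componentOf]
  exact and_congr_right fun _ =>
    ⟨(Std.Symm.symm _ _ hab).trans, hab.trans⟩

theorem connectedSub_componentOf {S : Finset Eg} {e : Eg} (he : e ∈ S) :
    ConnectedSub edge (componentOf edge S e) := by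
  have walk : ∀ {a b}, Relation.ReflTransGen (EdgeAdj edge S) e a →
      Relation.ReflTransGen (EdgeAdj edge S) a b →
      Relation.ReflTransGen (EdgeAdj edge (componentOf edge S e)) a b := by
    intro a b hea hab
    induction hab with
    | refl => exact .refl
    | tail hac hcd ih =>
      exact ih.tail ⟨mem_componentOf.2 ⟨hcd.1, hea.trans hac⟩,
        mem_componentOf.2 ⟨hcd.2.1, (hea.trans hac).tail hcd⟩, hcd.2.2⟩
  refine ⟨⟨e, self_mem_componentOf he⟩, fun a ha b hb => ?_⟩
  have hea := (mem_componentOf.1 ha).2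
  exact walk hea ((Std.Symm.symm _ _ hea).trans (mem_componentOf.1 hb).2)

theorem reflTransGen_edgeAdj_mono {S S' : Finset Eg} (h : S ⊆ S') {a b : Eg}
    (hab : Relation.ReflTransGen (EdgeAdj edge S) a b) :
    Relation.ReflTransGen (EdgeAdj edge S') a b :=
  Relation.ReflTransGen.mono (fun _ _ hxy => ⟨h hxy.1, h hxy.2.1, hxy.2.2⟩) _ _ hab

theorem isComponent_componentOf {S : Finset Eg} {e : Eg} (he : e ∈ S) :
    IsComponent edge S (componentOf edge S e) := by
  refine ⟨Finset.filter_subset _ _, connectedSub_componentOf he, fun T hsub hTS hT => ?_⟩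
  refine Finset.Subset.antisymm (fun b hb => mem_componentOf.2 ⟨hTS hb, ?_⟩) hsub
  exact reflTransGen_edgeAdj_mono hTS (hT.2 e (hsub (self_mem_componentOf he)) b hb)

theorem IsComponent.eq_componentOf {S T : Finset Eg} (hT : IsComponent edge S T) {e : Eg}
    (he : e ∈ T) : T = componentOf edge S e := by
  have hsub : T ⊆ componentOf edge S e := fun b hb =>
    mem_componentOf.2 ⟨hT.1 hb, reflTransGen_edgeAdj_mono hT.1 (hT.2.1.2 e he b hb)⟩
  exact (hT.2.2 _ hsub (Finset.filter_subset _ _) (connectedSub_componentOf (hT.1 he))).symm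

variable [Fintype Eg]

theorem mem_comp {S T : Finset Eg} : T ∈ comp edge S ↔ IsComponent edge S T := by
  simp [comp]

theorem biUnion_comp (S : Finset Eg) : (comp edge S).biUnion id = S := by
  refine Finset.Subset.antisymm (Finset.biUnion_subset.2 fun γ hγ => (mem_comp.1 hγ).1)
    fun e he => Finset.mem_biUnion.2 ⟨_, mem_comp.2 (isComponent_componentOf he),
      self_mem_componentOf he⟩

end Components

section Separated

variable [DecidableEq V] (edge : Eg → Finset V)

def Separated (A B : Finset Eg) : Prop :=
  Disjoint A B ∧ Disjoint (vertexSet edge A) (vertexSet edge B)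

variable {edge}

theorem Separated.mono {A A' B B' : Finset Eg} (h : Separated edge A B) (hA : A' ⊆ A)
    (hB : B' ⊆ B) : Separated edge A' B' :=
  ⟨h.1.mono hA hB, h.2.mono (Finset.biUnion_subset_biUnion_of_subset_left _ hA)
    (Finset.biUnion_subset_biUnion_of_subset_left _ hB)⟩

theorem separated_biUnion_right {A : Finset Eg} {P : Finset (Finset Eg)}
    (h : ∀ γ ∈ P, Separated edge A γ) : Separated edge A (P.biUnion id) :=
  ⟨(Finset.disjoint_biUnion_right _ _ _).2 fun γ hγ => (h γ hγ).1, by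
    rw [vertexSet, vertexSet, Finset.biUnion_biUnion]
    exact (Finset.disjoint_biUnion_right _ _ _).2 fun γ hγ => (h γ hγ).2⟩

theorem pairwise_separated_comp [Fintype Eg] (S : Finset Eg) :
    (comp edge S : Set (Finset Eg)).Pairwise (Separated edge) := by
  intro γ hγ γ' hγ' hne
  have hγ := mem_comp.1 hγ
  have hγ' := mem_comp.1 hγ'
  have unreachable : ∀ a ∈ γ, ∀ b ∈ γ', ¬ Relation.ReflTransGen (EdgeAdj edge S) a b :=
    fun a ha b hb hab => hne <| (hγ.eq_componentOf ha).trans <|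
      (componentOf_eq_of_reflTransGen hab).trans (hγ'.eq_componentOf hb).symm
  refine ⟨Finset.disjoint_left.2 fun a ha ha' => unreachable a ha a ha' .refl,
    Finset.disjoint_left.2 fun v hv hv' => ?_⟩
  obtain ⟨a, ha, hva⟩ := Finset.mem_biUnion.1 hv
  obtain ⟨b, hb, hvb⟩ := Finset.mem_biUnion.1 hv'
  exact unreachable a ha b hb
    (.single ⟨hγ.1 ha, hγ'.1 hb, v, Finset.mem_inter.2 ⟨hva, hvb⟩⟩)

theorem prod_eq_of_pairwise_separated {M : Type*} [CommMonoid M] {g : Finset Eg → M}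
    (h0 : g ∅ = 1) (hmul : ∀ A B, Separated edge A B → g (A ∪ B) = g A * g B)
    {P : Finset (Finset Eg)} (hP : (P : Set (Finset Eg)).Pairwise (Separated edge)) :
    g (P.biUnion id) = ∏ γ ∈ P, g γ := by
  induction P using Finset.induction_on with
  | empty => simp [h0]
  | insert γ P hγ ih =>
    rw [Finset.coe_insert, Set.pairwise_insert] at hP
    rw [Finset.biUnion_insert, Finset.prod_insert hγ, id, hmul _ _ (separated_biUnion_right
      fun γ' hγ' => (hP.2 γ' hγ' (ne_of_mem_of_not_mem hγ' hγ).symm).1), ih hP.1]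

theorem prod_comp_eq [Fintype Eg] {M : Type*} [CommMonoid M] {g : Finset Eg → M}
    (h0 : g ∅ = 1) (hmul : ∀ A B, Separated edge A B → g (A ∪ B) = g A * g B)
    (S : Finset Eg) :
    ∏ γ ∈ comp edge S, g γ = g S := by
  rw [← prod_eq_of_pairwise_separated h0 hmul (pairwise_separated_comp S), biUnion_comp]

end Separated

open scoped Kronecker

section NormalizedTrace

variable {m n : Type*} [Fintype m] [Fintype n]

theorem ntraceM_reindex (e : m ≃ n) (A : Matrix m m ℂ) :
    ntraceM (Matrix.reindex e e A) = ntraceM A := by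
  simp [ntraceM, Matrix.trace, Fintype.card_congr e, e.symm.sum_comp (fun i => A i i)]

theorem ntraceM_kronecker (A : Matrix m m ℂ) (B : Matrix n n ℂ) :
    ntraceM (A ⊗ₖ B) = ntraceM A * ntraceM B := by
  simp only [ntraceM, Matrix.trace_kronecker, Fintype.card_prod, Nat.cast_mul, mul_div_mul_comm]

theorem ntraceM_one [DecidableEq n] [Nonempty n] : ntraceM (1 : Matrix n n ℂ) = 1 := by
  simp [ntraceM, Matrix.trace_one]

end NormalizedTrace

section Restrict

variable {dim : V → ℕ} [DecidableEq V]

theorem liftGlobal_liftMat {S W : Finset V} (h : S ⊆ W) (A : Matrix (Loc dim S) (Loc dim S) ℂ) :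
    liftGlobal dim W (liftMat h A) = liftGlobal dim S A := by
  ext x y
  simp only [liftGlobal, liftMat, ← mul_assoc, ite_zero_mul_ite_zero, one_mul]
  congr 2
  refine propext ⟨fun ⟨hW, hS⟩ v hv => ?_, fun hS => ⟨fun v hv => hS v (mt (@h v) hv),
    fun v hv => hS v hv⟩⟩
  by_cases hvW : v ∈ W
  · exact hS ⟨v, hvW⟩ hv
  · exact hW v hvW

theorem piFinsetUnion_symm_apply {ι : Type*} [DecidableEq ι] {α : ι → Type*} {s t : Finset ι}
    (h : Disjoint s t) (x : ∀ i : (s ∪ t : Finset ι), α i) :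
    (Equiv.piFinsetUnion α h).symm x =
      (fun i : s => x ⟨i, Finset.mem_union_left _ i.2⟩,
        fun i : t => x ⟨i, Finset.mem_union_right _ i.2⟩) := by
  rw [Equiv.symm_apply_eq]
  funext ⟨i, hi⟩
  rcases Finset.mem_union.1 hi with hs | ht
  · rw [Equiv.piFinsetUnion_left α h hs hi]
  · rw [Equiv.piFinsetUnion_right α h ht hi]

variable {S S' : Finset V}

theorem liftMat_union_left (h : Disjoint S S') (A : Matrix (Loc dim S) (Loc dim S) ℂ) :
    liftMat (Finset.subset_union_left (s₂ := S')) A =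
      Matrix.reindex (Equiv.piFinsetUnion (fun v => Fin (dim v)) h)
        (Equiv.piFinsetUnion (fun v => Fin (dim v)) h)
        (A ⊗ₖ (1 : Matrix (Loc dim S') (Loc dim S') ℂ)) := by
  ext x y
  simp only [liftMat, Matrix.reindex_apply, Matrix.submatrix_apply, piFinsetUnion_symm_apply,
    Matrix.kroneckerMap_apply, Matrix.one_apply, funext_iff, mul_ite, mul_one, mul_zero, ite_mul,
    one_mul, zero_mul]
  congr 1
  exact propext ⟨fun hxy w => hxy _ (Finset.disjoint_right.1 h w.2),
    fun hxy v hv => hxy ⟨v, (Finset.mem_union.1 v.2).resolve_left hv⟩⟩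

theorem liftMat_union_right (h : Disjoint S S') (B : Matrix (Loc dim S') (Loc dim S') ℂ) :
    liftMat (Finset.subset_union_right (s₁ := S)) B =
      Matrix.reindex (Equiv.piFinsetUnion (fun v => Fin (dim v)) h)
        (Equiv.piFinsetUnion (fun v => Fin (dim v)) h)
        ((1 : Matrix (Loc dim S) (Loc dim S) ℂ) ⊗ₖ B) := by
  ext x y
  simp only [liftMat, Matrix.reindex_apply, Matrix.submatrix_apply, piFinsetUnion_symm_apply,
    Matrix.kroneckerMap_apply, Matrix.one_apply, funext_iff, ite_mul, one_mul, zero_mul]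
  congr 1
  exact propext ⟨fun hxy w => hxy _ (Finset.disjoint_left.1 h w.2),
    fun hxy v hv => hxy ⟨v, (Finset.mem_union.1 v.2).resolve_right hv⟩⟩

theorem liftMat_union_left_mul_liftMat_union_right (h : Disjoint S S')
    (A : Matrix (Loc dim S) (Loc dim S) ℂ)
    (B : Matrix (Loc dim S') (Loc dim S') ℂ) :
    liftMat Finset.subset_union_left A * liftMat Finset.subset_union_right B =
      Matrix.reindex (Equiv.piFinsetUnion (fun v => Fin (dim v)) h)
        (Equiv.piFinsetUnion (fun v => Fin (dim v)) h) (A ⊗ₖ B) := by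
  rw [liftMat_union_left h, liftMat_union_right h, ← Matrix.coe_reindexAlgEquiv ℂ ℂ,
    ← map_mul, ← Matrix.mul_kronecker_mul, mul_one, one_mul]

theorem commute_liftMat_union_left_liftMat_union_right (h : Disjoint S S')
    (A : Matrix (Loc dim S) (Loc dim S) ℂ)
    (B : Matrix (Loc dim S') (Loc dim S') ℂ) :
    Commute (liftMat Finset.subset_union_left A) (liftMat Finset.subset_union_right B) := by
  rw [Commute, SemiconjBy, liftMat_union_left_mul_liftMat_union_right h, liftMat_union_left h,
    liftMat_union_right h, ← Matrix.coe_reindexAlgEquiv ℂ ℂ, ← map_mul,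
    ← Matrix.mul_kronecker_mul, mul_one, one_mul]

end Restrict

section Lift

variable {dim : V → ℕ}

theorem nonempty_pi_fin {ι : Type*} {d : ι → ℕ} (hd : ∀ i, 0 < d i) :
    Nonempty (∀ i, Fin (d i)) :=
  ⟨fun i => ⟨0, hd i⟩⟩

variable [DecidableEq V] [Fintype V]

abbrev splitAt (S : Finset V) : Glob dim ≃ Loc dim S × ∀ v : {v // v ∉ S}, Fin (dim v) :=
  Equiv.piEquivPiSubtypeProd (· ∈ S) _

theorem liftGlobal_eq_reindex_kronecker (S : Finset V) (A : Matrix (Loc dim S) (Loc dim S) ℂ) :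
    liftGlobal dim S A =
      Matrix.reindex (splitAt S).symm (splitAt S).symm (A ⊗ₖ (1 : Matrix _ _ ℂ)) := by
  ext x y
  simp only [liftGlobal, Matrix.reindex_apply, Matrix.submatrix_apply, Equiv.symm_symm,
    Matrix.kroneckerMap_apply, Matrix.one_apply, Equiv.piEquivPiSubtypeProd_apply, funext_iff,
    Subtype.forall, mul_ite, mul_one, mul_zero, ite_mul, one_mul, zero_mul]

noncomputable def liftGlobalAlgHom (S : Finset V) :
    Matrix (Loc dim S) (Loc dim S) ℂ →ₐ[ℂ] Matrix (Glob dim) (Glob dim) ℂ :=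
  (Matrix.reindexAlgEquiv ℂ ℂ (splitAt S).symm).toAlgHom.comp
    ((Matrix.kroneckerAlgEquiv (Loc dim S) (∀ v : {v // v ∉ S}, Fin (dim v)) ℂ).toAlgHom.comp
      Algebra.TensorProduct.includeLeft)

theorem liftGlobalAlgHom_apply (S : Finset V) (A : Matrix (Loc dim S) (Loc dim S) ℂ) :
    liftGlobalAlgHom S A = liftGlobal dim S A := by
  simp [liftGlobalAlgHom, liftGlobal_eq_reindex_kronecker]

theorem smul_liftGlobal (c : ℂ) (S : Finset V) (A : Matrix (Loc dim S) (Loc dim S) ℂ) :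
    c • liftGlobal dim S A = liftGlobal dim S (c • A) := by
  rw [← liftGlobalAlgHom_apply, ← liftGlobalAlgHom_apply, map_smul]

theorem exp_liftGlobal (S : Finset V) (A : Matrix (Loc dim S) (Loc dim S) ℂ) :
    NormedSpace.exp (liftGlobal dim S A) = liftGlobal dim S (NormedSpace.exp A) := by
  -- Any norms will do: `liftGlobalAlgHom S` is continuous since its domain is finite-dimensional.
  let : NormedRing (Matrix (Loc dim S) (Loc dim S) ℂ) := Matrix.linftyOpNormedRing
  let : NormedAlgebra ℂ (Matrix (Loc dim S) (Loc dim S) ℂ) := Matrix.linftyOpNormedAlgebra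
  let : NormedAlgebra ℚ (Matrix (Loc dim S) (Loc dim S) ℂ) := .restrictScalars ℚ ℂ _
  let : NormedRing (Matrix (Glob dim) (Glob dim) ℂ) := Matrix.linftyOpNormedRing
  have hcont : Continuous (liftGlobalAlgHom (dim := dim) S) :=
    LinearMap.continuous_of_finiteDimensional (liftGlobalAlgHom S).toLinearMap
  rw [← liftGlobalAlgHom_apply, ← liftGlobalAlgHom_apply]
  exact (NormedSpace.map_exp _ hcont A).symm

theorem ntraceM_liftGlobal (hdim : ∀ v, 0 < dim v) (S : Finset V)
    (A : Matrix (Loc dim S) (Loc dim S) ℂ) : ntraceM (liftGlobal dim S A) = ntraceM A := by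
  have := nonempty_pi_fin fun v : {v // v ∉ S} => hdim v
  rw [liftGlobal_eq_reindex_kronecker, ntraceM_reindex, ntraceM_kronecker, ntraceM_one, mul_one]

variable {S S' : Finset V}

theorem commute_liftGlobal_of_disjoint (h : Disjoint S S') (A : Matrix (Loc dim S) (Loc dim S) ℂ)
    (B : Matrix (Loc dim S') (Loc dim S') ℂ) :
    Commute (liftGlobal dim S A) (liftGlobal dim S' B) := by
  rw [← liftGlobal_liftMat (Finset.subset_union_left (s₂ := S')) A,
    ← liftGlobal_liftMat Finset.subset_union_right B, ← liftGlobalAlgHom_apply,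
    ← liftGlobalAlgHom_apply]
  exact (commute_liftMat_union_left_liftMat_union_right h A B).map _

theorem ntraceM_liftGlobal_mul_liftGlobal (hdim : ∀ v, 0 < dim v) (h : Disjoint S S')
    (A : Matrix (Loc dim S) (Loc dim S) ℂ) (B : Matrix (Loc dim S') (Loc dim S') ℂ) :
    ntraceM (liftGlobal dim S A * liftGlobal dim S' B) = ntraceM A * ntraceM B := by
  rw [← liftGlobal_liftMat (Finset.subset_union_left (s₂ := S')) A,
    ← liftGlobal_liftMat Finset.subset_union_right B, ← liftGlobalAlgHom_apply,
    ← liftGlobalAlgHom_apply, ← map_mul, liftGlobalAlgHom_apply, ntraceM_liftGlobal hdim,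
    liftMat_union_left_mul_liftMat_union_right h, ntraceM_reindex, ntraceM_kronecker]

end Lift

section PartitionFunction

variable [DecidableEq V] [Fintype V] {edge : Eg → Finset V} {dim : V → ℕ}
  (Φ : ∀ e : Eg, Matrix (Loc dim (edge e)) (Loc dim (edge e)) ℂ) (β : ℂ)

variable (edge) in
noncomputable def partitionFn (T : Finset Eg) : ℂ :=
  ntraceM (NormedSpace.exp ((-β) • ∑ e ∈ T, liftGlobal dim (edge e) (Φ e)))

theorem liftGlobal_sum_liftMat {γ T : Finset Eg} (hT : T ⊆ γ) :
    liftGlobal dim (vertexSet edge γ)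
        (∑ e ∈ T,
          if he : e ∈ γ then liftMat (Finset.subset_biUnion_of_mem edge he) (Φ e) else 0) =
      ∑ e ∈ T, liftGlobal dim (edge e) (Φ e) := by
  rw [← liftGlobalAlgHom_apply, map_sum]
  refine Finset.sum_congr rfl fun e he => ?_
  rw [dif_pos (hT he), liftGlobalAlgHom_apply, liftGlobal_liftMat]

theorem ntraceM_exp_sum_liftMat (hdim : ∀ v, 0 < dim v) {γ T : Finset Eg} (hT : T ⊆ γ) :
    ntraceM (NormedSpace.exp ((-β) • ∑ e ∈ T,
        (if he : e ∈ γ then liftMat (Finset.subset_biUnion_of_mem edge he) (Φ e) else 0 :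
          Matrix (Loc dim (vertexSet edge γ)) (Loc dim (vertexSet edge γ)) ℂ))) =
      partitionFn edge Φ β T := by
  rw [partitionFn, ← liftGlobal_sum_liftMat Φ hT, smul_liftGlobal, exp_liftGlobal,
    ntraceM_liftGlobal hdim]

theorem weight_eq_mobiusPowerset (hdim : ∀ v, 0 < dim v) (γ : Finset Eg) :
    weight edge dim Φ β γ = mobiusPowerset (partitionFn edge Φ β) γ := by
  rw [weight, mobiusPowerset]
  congr 1
  refine Finset.sum_congr rfl fun T hT => ?_
  rw [ntraceM_exp_sum_liftMat Φ β hdim (Finset.mem_powerset.1 hT)]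

theorem partitionFn_empty (hdim : ∀ v, 0 < dim v) : partitionFn edge Φ β ∅ = 1 := by
  have := nonempty_pi_fin hdim
  rw [partitionFn, Finset.sum_empty, smul_zero, NormedSpace.exp_zero, ntraceM_one]

theorem partitionFn_union (hdim : ∀ v, 0 < dim v) {A B : Finset Eg} (h : Separated edge A B) :
    partitionFn edge Φ β (A ∪ B) = partitionFn edge Φ β A * partitionFn edge Φ β B := by
  rw [← ntraceM_exp_sum_liftMat Φ β hdim (subset_refl A),
    ← ntraceM_exp_sum_liftMat Φ β hdim (subset_refl B), partitionFn, Finset.sum_union h.1,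
    ← liftGlobal_sum_liftMat Φ (subset_refl A), ← liftGlobal_sum_liftMat Φ (subset_refl B),
    smul_add, smul_liftGlobal, smul_liftGlobal,
    Matrix.exp_add_of_commute _ _ (commute_liftGlobal_of_disjoint h.2 _ _), exp_liftGlobal,
    exp_liftGlobal, ntraceM_liftGlobal_mul_liftGlobal hdim h.2]

end PartitionFunction

theorem partition_function_polymer_representation_general
    [DecidableEq V] [Fintype V] [Fintype Eg]
    (edge : Eg → Finset V)
    (dim : V → ℕ) (hdim : ∀ v, 0 < dim v)
    (Φ : ∀ e : Eg, Matrix (Loc dim (edge e)) (Loc dim (edge e)) ℂ)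
    (β : ℂ) :
    ntraceM (NormedSpace.exp
        ((-β) • ∑ e : Eg, liftGlobal dim (edge e) (Φ e))) =
      ∑ S : Finset Eg, ∏ γ ∈ comp edge S, weight edge dim Φ β γ := by
  have h0 : mobiusPowerset (partitionFn edge Φ β) ∅ = 1 := by
    rw [mobiusPowerset_empty, partitionFn_empty Φ β hdim]
  have hmul : ∀ A B, Separated edge A B → mobiusPowerset (partitionFn edge Φ β) (A ∪ B) =
      mobiusPowerset (partitionFn edge Φ β) A * mobiusPowerset (partitionFn edge Φ β) B :=
    fun A B h => mobiusPowerset_union h.1 fun A' hA' B' hB' =>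
      partitionFn_union Φ β hdim (h.mono hA' hB')
  calc _ = partitionFn edge Φ β Finset.univ := rfl
    _ = ∑ S, mobiusPowerset (partitionFn edge Φ β) S := (sum_mobiusPowerset _).symm
    _ = _ := Finset.sum_congr rfl fun S _ => by
        simp_rw [weight_eq_mobiusPowerset Φ β hdim, prod_comp_eq h0 hmul]

/-- **Lemma 9 of the paper.** The quantum partition function
`Z_G(β) = tr[e^{−β H_G}]`, `H_G = Σ_{ε∈E} Φ(ε)`, admits the abstract polymer model
representation `Z_G(β) = Σ_{S ⊆ E} Π_{γ ∈ comp(S)} w_γ`. -/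
theorem partition_function_polymer_representation
    [DecidableEq V] [Fintype V] [Fintype Eg]
    (edge : Eg → Finset V) (hne : ∀ e : Eg, (edge e).Nonempty)
    (dim : V → ℕ) (hdim : ∀ v, 0 < dim v)
    (Φ : ∀ e : Eg, Matrix (Loc dim (edge e)) (Loc dim (edge e)) ℂ)
    (hherm : ∀ e : Eg, (Φ e)ᴴ = Φ e)
    (β : ℂ) :
    ntraceM (NormedSpace.exp
        ((-β) • ∑ e : Eg, liftGlobal dim (edge e) (Φ e))) =
      ∑ S : Finset Eg, ∏ γ ∈ comp edge S, weight edge dim Φ β γ :=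
  partition_function_polymer_representation_general edge dim hdim Φ β

end Stmt14
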